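/- Bates' x% rule: assume r = δ and the symmetry condition ψ̃ = ψ (equivalently Π(dy) = e^{−y}Π(−dy)). Then for any x > 0, with strikes K_c = (1+x)F₀ and K_p = F₀/(1+x), the call and put prices satisfy c(F₀, K_c) = (1+x)·p(F₀, K_p), where c(S₀,K) = E[e^{−rT}(S₀e^{X_T} − K)⁺] and p(S₀,K) = E[e^{−rT}(K − S₀e^{X_T})⁺]. -/

import Mathlib

open MeasureTheory Real

/-! Transport the call payoff along the symmetry: the law of `e^{X_T}` under `Q` is that of
`e^{-X_T}` under `Q̃ = e^{X_T} · Q`, so `E[f(e^{X_T})] = E[e^{X_T} f(e^{-X_T})]` for every payoff `f`.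
For the call struck at `(1+x)F₀`, the payoff `e^{X} (F₀ e^{-X} - (1+x)F₀)⁺` is `(1+x)` times the
put payoff `(F₀/(1+x) - F₀ e^{X})⁺`, and discounting is linear. -/

theorem integral_withDensity_ofReal {Ω E : Type*} [MeasurableSpace Ω] [NormedAddCommGroup E]
    [NormedSpace ℝ E] {μ : Measure Ω} {ρ : Ω → ℝ} (hρ : AEMeasurable ρ μ) (hρ_nonneg : 0 ≤ᵐ[μ] ρ)
    (g : Ω → E) :
    ∫ ω, g ω ∂μ.withDensity (fun ω => ENNReal.ofReal (ρ ω)) = ∫ ω, ρ ω • g ω ∂μ := by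
  rw [integral_withDensity_eq_integral_toReal_smul₀ hρ.ennreal_ofReal
    (.of_forall fun _ => ENNReal.ofReal_lt_top)]
  refine integral_congr_ae ?_
  filter_upwards [hρ_nonneg] with ω hω
  rw [ENNReal.toReal_ofReal hω]

theorem integral_comp_exp_eq_integral_exp_mul_comp_exp_neg {Ω : Type*} [MeasurableSpace Ω]
    {Q : Measure Ω} {X : Ω → ℝ} (hX : Measurable X)
    (hsym : Q.map (fun ω => Real.exp (X ω))
      = (Q.withDensity fun ω => ENNReal.ofReal (Real.exp (X ω))).map
          (fun ω => Real.exp (-X ω)))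
    {f : ℝ → ℝ} (hf : AEStronglyMeasurable f (Q.map fun ω => Real.exp (X ω))) :
    ∫ ω, f (Real.exp (X ω)) ∂Q = ∫ ω, Real.exp (X ω) * f (Real.exp (-X ω)) ∂Q := calc
  _ = ∫ s, f s ∂Q.map fun ω => Real.exp (X ω) :=
    (integral_map (measurable_exp.comp hX).aemeasurable hf).symm
  _ = ∫ ω, f (Real.exp (-X ω)) ∂Q.withDensity fun ω => ENNReal.ofReal (Real.exp (X ω)) := by
    rw [hsym] at hf ⊢
    exact integral_map (measurable_exp.comp hX.neg).aemeasurable hf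
  _ = _ := integral_withDensity_ofReal (measurable_exp.comp hX).aemeasurable
    (.of_forall fun _ => (exp_pos _).le) _

theorem exp_mul_call_payoff_exp_neg (F₀ x y : ℝ) (hx : 0 < 1 + x) :
    Real.exp y * max (F₀ * Real.exp (-y) - (1 + x) * F₀) 0
      = (1 + x) * max (F₀ / (1 + x) - F₀ * Real.exp y) 0 := by
  rw [mul_max_of_nonneg _ _ (exp_pos y).le, mul_max_of_nonneg _ _ hx.le, mul_zero, mul_zero,
    exp_neg]
  congr 1
  field_simp

theorem bates_x_rule_general
    {Ω : Type*} [MeasurableSpace Ω] (Q : Measure Ω)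
    (X : Ω → ℝ) (hX : Measurable X) (T r F₀ x : ℝ)
    (hx : 0 < x)
    (hsym : Q.map (fun ω => Real.exp (X ω))
      = (Q.withDensity fun ω => ENNReal.ofReal (Real.exp (X ω))).map
          (fun ω => Real.exp (-X ω))) :
    Real.exp (-r * T) * ∫ ω, max (F₀ * Real.exp (X ω) - (1 + x) * F₀) 0 ∂Q
      = (1 + x) *
        (Real.exp (-r * T) *
          ∫ ω, max (F₀ / (1 + x) - F₀ * Real.exp (X ω)) 0 ∂Q) := by
  have hpayoff : Continuous fun s : ℝ => max (F₀ * s - (1 + x) * F₀) 0 := by fun_prop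
  rw [integral_comp_exp_eq_integral_exp_mul_comp_exp_neg hX hsym hpayoff.aestronglyMeasurable]
  simp_rw [exp_mul_call_payoff_exp_neg F₀ x _ (by linarith : 0 < 1 + x), integral_const_mul]
  ring

/-- Bates' x% rule: with `r = δ` (so `E_Q[e^{X_T}] = 1`) and the
symmetry condition (the law of `e^{X_T}` under `Q` equals the law of `e^{−X_T}`
under the dual measure `Q̃` with `dQ̃/dQ = e^{X_T}`), for any `x > 0`, with
strikes `K_c = (1+x)F₀` and `K_p = F₀/(1+x)`, we have
`c(F₀, K_c) = (1+x) p(F₀, K_p)`. -/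
theorem bates_x_rule
    {Ω : Type*} [MeasurableSpace Ω] (Q : Measure Ω) [IsProbabilityMeasure Q]
    (X : Ω → ℝ) (hX : Measurable X) (T r F₀ x : ℝ)
    (hT : 0 < T) (hr : 0 ≤ r) (hF₀ : 0 < F₀) (hx : 0 < x)
    (hint : Integrable (fun ω => Real.exp (X ω)) Q)
    (hmart : ∫ ω, Real.exp (X ω) ∂Q = 1)
    (hsym : Q.map (fun ω => Real.exp (X ω))
      = (Q.withDensity fun ω => ENNReal.ofReal (Real.exp (X ω))).map
          (fun ω => Real.exp (-X ω))) :
    Real.exp (-r * T) * ∫ ω, max (F₀ * Real.exp (X ω) - (1 + x) * F₀) 0 ∂Q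
      = (1 + x) *
        (Real.exp (-r * T) *
          ∫ ω, max (F₀ / (1 + x) - F₀ * Real.exp (X ω)) 0 ∂Q) :=
  bates_x_rule_general Q X hX T r F₀ x hx hsym
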